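/- arXiv:2306.15366 — 2 statements merged into one kernel-verified Lean document; each statement's English description precedes it below -/
import Mathlib

section
/- Let {α_n} be finite nonnegative Borel measures on Ω converging in total variation norm to α, and let μ be an ℝ^N-valued measure with |μ| ≤ α. Then there exists a sequence μ_n with |μ_n| ≤ α_n for each n and ‖μ_n − μ‖_{M(Ω)^N} → 0. (One may take μ_n = g_n μ where g_n is the density of the absolutely continuous part of α_n with respect to α.) -/
open MeasureTheory Filter Topology ENNReal NNReal

noncomputable section

/-- Total variation of a vector measure as a set function (sup over countable
measurable partitions). -/
def tv {Ω : Type*} [MeasurableSpace Ω] {E : Type*} [NormedAddCommGroup E]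
    (μ : VectorMeasure Ω E) (B : Set Ω) : ℝ≥0∞ :=
  ⨆ (P : ℕ → Set Ω) (_ : ∀ n, MeasurableSet (P n))
    (_ : Pairwise (Function.onFun Disjoint P)) (_ : (⋃ n, P n) = B),
    ∑' n, (‖μ (P n)‖₊ : ℝ≥0∞)

/-- `|μ| ≤ α` for a vector measure `μ` and a nonnegative measure `α`. -/
def tvLE {Ω : Type*} [MeasurableSpace Ω] {E : Type*} [NormedAddCommGroup E]
    (μ : VectorMeasure Ω E) (α : Measure Ω) : Prop :=
  ∀ B : Set Ω, MeasurableSet B → tv μ B ≤ α B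

/-- Integral of a real function against a finite signed measure (via Jordan
decomposition). -/
def sInt {Ω : Type*} [MeasurableSpace Ω] (s : SignedMeasure Ω) (f : Ω → ℝ) : ℝ :=
  ∫ x, f x ∂s.toJordanDecomposition.posPart - ∫ x, f x ∂s.toJordanDecomposition.negPart

/-- The `i`-th component (a signed measure) of an `ℝ^N`-valued vector measure. -/
def comp {Ω : Type*} [MeasurableSpace Ω] {N : ℕ}
    (μ : VectorMeasure Ω (EuclideanSpace ℝ (Fin N))) (i : Fin N) : SignedMeasure Ω :=
  μ.mapRange (EuclideanSpace.projₗ (𝕜 := ℝ) i).toAddMonoidHom (EuclideanSpace.proj (𝕜 := ℝ) i).continuous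

/-- Integral `∫ φ · dμ` of an `ℝ^N`-valued function against an `ℝ^N`-valued
vector measure. -/
def vInt {Ω : Type*} [MeasurableSpace Ω] {N : ℕ}
    (μ : VectorMeasure Ω (EuclideanSpace ℝ (Fin N))) (φ : Ω → EuclideanSpace ℝ (Fin N)) : ℝ :=
  ∑ i : Fin N, sInt (comp μ i) (fun x => φ x i)



lemma nnnorm_apply_le_tv {Ω : Type*} [MeasurableSpace Ω] {E : Type*} [NormedAddCommGroup E]
    (μ : VectorMeasure Ω E) {B : Set Ω} (hB : MeasurableSet B) :
    (‖μ B‖₊ : ℝ≥0∞) ≤ tv μ B := by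
  set P : ℕ → Set Ω := fun n => if n = 0 then B else ∅ with hP
  have h1 : ∀ n, MeasurableSet (P n) := by
    intro n; by_cases h : n = 0 <;> simp [P, h, hB]
  have h2 : Pairwise (Function.onFun Disjoint P) := by
    intro i j hij
    rcases eq_or_ne j 0 with hj | hj
    · subst hj
      have : i ≠ 0 := hij
      simp [Function.onFun, P, this]
    · simp [Function.onFun, P, hj]
  have h3 : (⋃ n, P n) = B := by
    ext x
    simp only [Set.mem_iUnion, P]
    constructor
    · rintro ⟨n, hn⟩
      by_cases h : n = 0
      · simpa [h] using hn
      · simp [h] at hn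
    · intro hx; exact ⟨0, by simpa using hx⟩
  have h4 : (∑' n, (‖μ (P n)‖₊ : ℝ≥0∞)) = (‖μ B‖₊ : ℝ≥0∞) := by
    rw [tsum_eq_single 0]
    · simp [P]
    · intro n hn; simp [P, hn]
  calc (‖μ B‖₊ : ℝ≥0∞) = ∑' n, (‖μ (P n)‖₊ : ℝ≥0∞) := h4.symm
    _ ≤ tv μ B := by
        rw [tv]
        exact le_iSup_of_le P (le_iSup_of_le h1 (le_iSup_of_le h2 (le_iSup_of_le h3 le_rfl)))

lemma tv_withDensityᵥ_le {Ω : Type*} [MeasurableSpace Ω] {E : Type*}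
    [NormedAddCommGroup E] [NormedSpace ℝ E] [CompleteSpace E] (α : Measure Ω) (w : Ω → E)
    (hw : Integrable w α) (B : Set Ω) :
    tv (α.withDensityᵥ w) B ≤ ∫⁻ x in B, ‖w x‖₊ ∂α := by
  rw [tv]
  refine iSup_le fun P => iSup_le fun hP => iSup_le fun hPd => iSup_le fun hPU => ?_
  calc (∑' n, (‖(α.withDensityᵥ w) (P n)‖₊ : ℝ≥0∞))
      ≤ ∑' n, ∫⁻ x in P n, ‖w x‖₊ ∂α := by
        refine ENNReal.tsum_le_tsum fun n => ?_
        rw [withDensityᵥ_apply hw (hP n)]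
        exact enorm_integral_le_lintegral_enorm _
    _ = ∫⁻ x in ⋃ n, P n, ‖w x‖₊ ∂α := (lintegral_iUnion hP hPd _).symm
    _ = ∫⁻ x in B, ‖w x‖₊ ∂α := by rw [hPU]

section AuxMain

variable {Ω : Type*} [MeasurableSpace Ω] {N : ℕ}

lemma exists_density (α : Measure Ω) [IsFiniteMeasure α]
    (μ : VectorMeasure Ω (EuclideanSpace ℝ (Fin N))) (hle : tvLE μ α) :
    ∃ f : Ω → EuclideanSpace ℝ (Fin N), Measurable f ∧ Integrable f α ∧
      μ = α.withDensityᵥ f ∧ (∀ᵐ x ∂α, ‖f x‖ ≤ 1) := by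
  classical
  set f0 : Fin N → Ω → ℝ := fun i => (comp μ i).rnDeriv α with hf0
  have hac : ∀ i, comp μ i ≪ᵥ α.toENNRealVectorMeasure := by
    intro i
    refine VectorMeasure.AbsolutelyContinuous.mk fun B hB hB0 => ?_
    rw [Measure.toENNRealVectorMeasure_apply_measurable hB] at hB0
    have hμB : μ B = 0 := by
      have h1 : (‖μ B‖₊ : ℝ≥0∞) ≤ tv μ B := nnnorm_apply_le_tv μ hB
      have h2 : tv μ B ≤ α B := hle B hB
      have h3 : (‖μ B‖₊ : ℝ≥0∞) = 0 := le_antisymm (h1.trans (h2.trans_eq hB0)) zero_le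
      simpa using h3
    show EuclideanSpace.projₗ (𝕜 := ℝ) i (μ B) = 0
    rw [hμB]; simp
  have hcompeq : ∀ i, α.withDensityᵥ (f0 i) = comp μ i := fun i =>
    SignedMeasure.withDensityᵥ_rnDeriv_eq _ _ (hac i)
  have hf0int : ∀ i, Integrable (f0 i) α := fun i => SignedMeasure.integrable_rnDeriv _ _
  have hf0meas : ∀ i, Measurable (f0 i) := fun i => SignedMeasure.measurable_rnDeriv _ _
  set f : Ω → EuclideanSpace ℝ (Fin N) :=
    fun x => ∑ i, f0 i x • EuclideanSpace.single i (1 : ℝ) with hf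
  have hfmeas : Measurable f :=
    Finset.measurable_sum _ fun i _ => (hf0meas i).smul_const _
  have hfint : Integrable f α :=
    integrable_finset_sum _ fun i _ => (hf0int i).smul_const _
  have hproj : ∀ (x : Ω) (i : Fin N), f x i = f0 i x := by
    intro x i
    have : (EuclideanSpace.proj (𝕜 := ℝ) i) (f x) = f0 i x := by
      rw [hf]
      simp only [map_sum, _root_.map_smul]
      simp [EuclideanSpace.proj, EuclideanSpace.single_apply, PiLp.proj_apply,
        Finset.sum_ite_eq']
    simpa using this
  have hμeq : μ = α.withDensityᵥ f := by
    refine VectorMeasure.ext fun B hB => ?_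
    rw [withDensityᵥ_apply hfint hB]
    ext i
    have h1 : (μ B) i = comp μ i B := by
      rfl
    have h2 : (∫ x in B, f x ∂α) i = ∫ x in B, f0 i x ∂α := by
      have := (EuclideanSpace.proj (𝕜 := ℝ) i).integral_comp_comm (hfint.restrict (s := B))
      simp only [EuclideanSpace.proj, PiLp.proj_apply] at this
      rw [← this]
      exact integral_congr_ae (Filter.Eventually.of_forall fun x => hproj x i)
    rw [h1, h2, ← hcompeq i, withDensityᵥ_apply (hf0int i) hB]
  -- norm bound
  have hbound : ∀ᵐ x ∂α, ‖f x‖ ≤ 1 := by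
    obtain ⟨D, hDc, hDd⟩ := TopologicalSpace.exists_countable_dense (EuclideanSpace ℝ (Fin N))
    have key : ∀ e : EuclideanSpace ℝ (Fin N),
        ∀ᵐ x ∂α, (inner ℝ e (f x) : ℝ) ≤ ‖e‖ := by
      intro e
      have hint : Integrable (fun x => (inner ℝ e (f x) : ℝ)) α :=
        (innerSL ℝ e).integrable_comp hfint
      refine ae_le_of_forall_setIntegral_le hint (integrable_const _) ?_
      intro B hB hBfin
      have h1 : ∫ x in B, (inner ℝ e (f x) : ℝ) ∂α = inner ℝ e (μ B) := by
        rw [hμeq, withDensityᵥ_apply hfint hB]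
        exact integral_inner hfint.integrableOn e
      have h2 : ‖μ B‖ ≤ (α B).toReal := by
        have := (nnnorm_apply_le_tv μ hB).trans (hle B hB)
        have h3 := ENNReal.toReal_mono (measure_ne_top α B) this
        simpa using h3
      have h4 : (inner ℝ e (μ B) : ℝ) ≤ (α B).toReal * ‖e‖ := by
        calc (inner ℝ e (μ B) : ℝ) ≤ ‖e‖ * ‖μ B‖ := real_inner_le_norm e (μ B)
          _ ≤ ‖e‖ * (α B).toReal := by
              exact mul_le_mul_of_nonneg_left h2 (norm_nonneg e)
          _ = (α B).toReal * ‖e‖ := mul_comm _ _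
      rw [h1]
      calc (inner ℝ e (μ B) : ℝ) ≤ (α B).toReal * ‖e‖ := h4
        _ = ∫ _ in B, ‖e‖ ∂α := by rw [setIntegral_const]; simp [smul_eq_mul, Measure.real]
    have key2 : ∀ᵐ x ∂α, ∀ e ∈ D, (inner ℝ e (f x) : ℝ) ≤ ‖e‖ :=
      (ae_ball_iff hDc).2 fun e _ => key e
    filter_upwards [key2] with x hx
    have hall : ∀ e : EuclideanSpace ℝ (Fin N), (inner ℝ e (f x) : ℝ) ≤ ‖e‖ := by
      intro e
      have hcl : IsClosed {e : EuclideanSpace ℝ (Fin N) | (inner ℝ e (f x) : ℝ) ≤ ‖e‖} :=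
        isClosed_le (continuous_id.inner continuous_const) continuous_norm
      have hsub : D ⊆ {e : EuclideanSpace ℝ (Fin N) | (inner ℝ e (f x) : ℝ) ≤ ‖e‖} :=
        fun e he => hx e he
      have : closure D ⊆ {e : EuclideanSpace ℝ (Fin N) | (inner ℝ e (f x) : ℝ) ≤ ‖e‖} :=
        hcl.closure_subset_iff.2 hsub
      exact this (by rw [hDd.closure_eq]; trivial)
    have hself := hall (f x)
    rw [real_inner_self_eq_norm_mul_norm] at hself
    nlinarith [norm_nonneg (f x)]
  exact ⟨f, hfmeas, hfint, hμeq, hbound⟩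

/-- One-sided bound: `∫ (1 - dβ/dα)⁺ dα ≤ ‖β - α‖_TV`. -/
lemma lintegral_one_sub_rnDeriv_le (β α : Measure Ω) [IsFiniteMeasure α] [IsFiniteMeasure β] :
    ∫⁻ x, (1 - β.rnDeriv α x) ∂α ≤
      (β.toSignedMeasure - α.toSignedMeasure).totalVariation Set.univ := by
  classical
  set ξ := β.rnDeriv α with hξ
  obtain ⟨T, hTm, hT1, hT2⟩ := Measure.mutuallySingular_singularPart β α
  -- hT1 : β.singularPart α T = 0, hT2 : α Tᶜ = 0
  set B := T ∩ {x | ξ x < 1} with hBdef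
  have hBmeas : MeasurableSet B := hTm.inter (measurableSet_lt (Measure.measurable_rnDeriv β α) measurable_const)
  have hT' : ∀ᵐ x ∂α, x ∈ T := by
    rw [Filter.eventually_iff, mem_ae_iff]
    simpa using hT2
  have h1 : ∫⁻ x, (1 - ξ x) ∂α = ∫⁻ x in B, (1 - ξ x) ∂α := by
    rw [← lintegral_indicator hBmeas]
    refine lintegral_congr_ae ?_
    filter_upwards [hT'] with x hx
    by_cases hlt : ξ x < 1
    · rw [Set.indicator_of_mem (Set.mem_inter hx hlt) _]
    · rw [Set.indicator_of_notMem (fun h => hlt h.2), tsub_eq_zero_of_le (not_lt.1 hlt)]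
  have hfin : ∫⁻ x in B, ξ x ∂α ≠ ∞ := by
    refine ne_of_lt (lt_of_le_of_lt ?_ (Measure.lintegral_rnDeriv_lt_top β α))
    exact lintegral_mono' Measure.restrict_le_self le_rfl
  have h2 : ∫⁻ x in B, (1 - ξ x) ∂α = α B - ∫⁻ x in B, ξ x ∂α := by
    rw [lintegral_sub (Measure.measurable_rnDeriv β α) hfin]
    · simp [Measure.restrict_apply_univ, ξ]
    · refine (ae_restrict_mem hBmeas).mono fun x hx => le_of_lt hx.2
  have h3 : ∫⁻ x in B, ξ x ∂α = β B := by
    have hdec := Measure.haveLebesgueDecomposition_add β α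
    have hsB : β.singularPart α B = 0 :=
      le_antisymm (le_trans (measure_mono Set.inter_subset_left) hT1.le) zero_le
    calc ∫⁻ x in B, ξ x ∂α = α.withDensity ξ B := (withDensity_apply ξ hBmeas).symm
      _ = β.singularPart α B + α.withDensity ξ B := by rw [hsB, zero_add]
      _ = β B := by
          conv_rhs => rw [hdec]
          rw [Measure.add_apply]
  -- signed measure estimate
  set s := β.toSignedMeasure - α.toSignedMeasure with hs
  have hsB : s B = (β B).toReal - (α B).toReal := by
    rw [hs, VectorMeasure.sub_apply, Measure.toSignedMeasure_apply_measurable hBmeas,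
      Measure.toSignedMeasure_apply_measurable hBmeas]; rfl
  set J := s.toJordanDecomposition with hJ
  have hsB' : s B = (J.posPart B).toReal - (J.negPart B).toReal := by
    conv_lhs => rw [← s.toSignedMeasure_toJordanDecomposition]
    rw [JordanDecomposition.toSignedMeasure, VectorMeasure.sub_apply,
      Measure.toSignedMeasure_apply_measurable hBmeas,
      Measure.toSignedMeasure_apply_measurable hBmeas]; rfl
  have hreal : (α B).toReal ≤ (β B).toReal + (J.negPart B).toReal := by
    have := hsB.symm.trans hsB'
    have hpos : (0 : ℝ) ≤ (J.posPart B).toReal := ENNReal.toReal_nonneg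
    linarith
  have hEN : α B ≤ β B + J.negPart B := by
    rw [← ENNReal.toReal_le_toReal (measure_ne_top α B)
      (ENNReal.add_ne_top.2 ⟨measure_ne_top β B, measure_ne_top _ B⟩),
      ENNReal.toReal_add (measure_ne_top β B) (measure_ne_top _ B)]
    exact hreal
  have h4 : α B - β B ≤ J.negPart B := tsub_le_iff_right.2 (by rwa [add_comm] at hEN)
  calc ∫⁻ x, (1 - ξ x) ∂α = α B - β B := by rw [h1, h2, h3]
    _ ≤ J.negPart B := h4
    _ ≤ s.totalVariation B := by
        rw [SignedMeasure.totalVariation, Measure.add_apply]; exact le_add_self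
    _ ≤ s.totalVariation Set.univ := measure_mono (Set.subset_univ B)

theorem stmt_10' (Ω : Type*) [MeasurableSpace Ω]
    (α : Measure Ω) [IsFiniteMeasure α]
    (αn : ℕ → Measure Ω) [∀ n, IsFiniteMeasure (αn n)]
    (hconv : Tendsto
      (fun n => ((αn n).toSignedMeasure - α.toSignedMeasure).totalVariation Set.univ)
      atTop (nhds 0))
    (μ : VectorMeasure Ω (EuclideanSpace ℝ (Fin N))) (hle : tvLE μ α) :
    ∃ μn : ℕ → VectorMeasure Ω (EuclideanSpace ℝ (Fin N)),
      (∀ n, tvLE (μn n) (αn n)) ∧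
      Tendsto (fun n => tv (μn n - μ) Set.univ) atTop (nhds 0) := by
  classical
  obtain ⟨f, hfmeas, hfint, hμeq, hbound⟩ := exists_density α μ hle
  set g : ℕ → Ω → ℝ := fun n x => (min ((αn n).rnDeriv α x) 1).toReal with hg
  have hg01 : ∀ n x, 0 ≤ g n x ∧ g n x ≤ 1 := by
    intro n x
    refine ⟨ENNReal.toReal_nonneg, ?_⟩
    have h : min ((αn n).rnDeriv α x) 1 ≤ 1 := min_le_right _ _
    calc (min ((αn n).rnDeriv α x) 1).toReal ≤ (1 : ℝ≥0∞).toReal :=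
          ENNReal.toReal_mono one_ne_top h
      _ = 1 := by simp
  have hgmeas : ∀ n, Measurable (g n) := fun n =>
    (((αn n).measurable_rnDeriv α).min measurable_const).ennreal_toReal
  set w : ℕ → Ω → EuclideanSpace ℝ (Fin N) := fun n x => g n x • f x with hw
  have hwmeas : ∀ n, Measurable (w n) := fun n => (hgmeas n).smul hfmeas
  have hwint : ∀ n, Integrable (w n) α := by
    intro n
    refine Integrable.mono' (integrable_const 1) (hwmeas n).aestronglyMeasurable ?_
    filter_upwards [hbound] with x hx
    rw [hw]; dsimp only
    rw [norm_smul]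
    calc ‖g n x‖ * ‖f x‖ ≤ 1 * 1 := by
          refine mul_le_mul ?_ hx (norm_nonneg _) zero_le_one
          rw [Real.norm_eq_abs, abs_of_nonneg (hg01 n x).1]; exact (hg01 n x).2
      _ = 1 := one_mul 1
  refine ⟨fun n => α.withDensityᵥ (w n), ?_, ?_⟩
  · intro n B hB
    calc tv (α.withDensityᵥ (w n)) B ≤ ∫⁻ x in B, ‖w n x‖₊ ∂α :=
          tv_withDensityᵥ_le α _ (hwint n) B
      _ ≤ ∫⁻ x in B, min ((αn n).rnDeriv α x) 1 ∂α := by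
          refine lintegral_mono_ae ?_
          filter_upwards [ae_restrict_of_ae hbound] with x hx
          have h1 : ‖w n x‖ ≤ g n x := by
            rw [hw]; dsimp only
            rw [norm_smul, Real.norm_eq_abs, abs_of_nonneg (hg01 n x).1]
            calc g n x * ‖f x‖ ≤ g n x * 1 := mul_le_mul_of_nonneg_left hx (hg01 n x).1
              _ = g n x := mul_one _
          calc (‖w n x‖₊ : ℝ≥0∞) = ENNReal.ofReal ‖w n x‖ :=
                (ofReal_norm _).symm
            _ ≤ ENNReal.ofReal (g n x) := ENNReal.ofReal_le_ofReal h1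
            _ = min ((αn n).rnDeriv α x) 1 := by
                rw [hg]; dsimp only
                exact ENNReal.ofReal_toReal
                  (ne_of_lt (lt_of_le_of_lt (min_le_right _ _) one_lt_top))
      _ ≤ ∫⁻ x in B, (αn n).rnDeriv α x ∂α := lintegral_mono fun x => min_le_left _ _
      _ = α.withDensity ((αn n).rnDeriv α) B := (withDensity_apply _ hB).symm
      _ ≤ αn n B := Measure.le_iff'.1 (Measure.withDensity_rnDeriv_le _ _) B
  · have hb : ∀ n, tv (α.withDensityᵥ (w n) - μ) Set.univ ≤
        ((αn n).toSignedMeasure - α.toSignedMeasure).totalVariation Set.univ := by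
      intro n
      have hdiff : α.withDensityᵥ (w n) - μ = α.withDensityᵥ (fun x => w n x - f x) := by
        rw [hμeq, ← withDensityᵥ_sub (hwint n) hfint]; rfl
      rw [hdiff]
      calc tv (α.withDensityᵥ (fun x => w n x - f x)) Set.univ
          ≤ ∫⁻ x in Set.univ, ‖w n x - f x‖₊ ∂α :=
            tv_withDensityᵥ_le α _ ((hwint n).sub hfint) _
        _ = ∫⁻ x, (‖w n x - f x‖₊ : ℝ≥0∞) ∂α := by rw [Measure.restrict_univ]
        _ ≤ ∫⁻ x, (1 - (αn n).rnDeriv α x) ∂α := by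
            refine lintegral_mono_ae ?_
            filter_upwards [hbound] with x hx
            have h1 : ‖w n x - f x‖ ≤ 1 - g n x := by
              rw [hw]; dsimp only
              have h2 : g n x • f x - f x = (g n x - 1) • f x := by
                rw [sub_smul, one_smul]
              rw [h2, norm_smul, Real.norm_eq_abs,
                abs_of_nonpos (by linarith [(hg01 n x).2])]
              calc -(g n x - 1) * ‖f x‖ ≤ -(g n x - 1) * 1 :=
                    mul_le_mul_of_nonneg_left hx (by linarith [(hg01 n x).2])
                _ = 1 - g n x := by ring
            calc (‖w n x - f x‖₊ : ℝ≥0∞) = ENNReal.ofReal ‖w n x - f x‖ :=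
                  (ofReal_norm _).symm
              _ ≤ ENNReal.ofReal (1 - g n x) := ENNReal.ofReal_le_ofReal h1
              _ = 1 - min ((αn n).rnDeriv α x) 1 := by
                  rw [hg]; dsimp only
                  rw [ENNReal.ofReal_sub _ ENNReal.toReal_nonneg, ENNReal.ofReal_one,
                    ENNReal.ofReal_toReal
                      (ne_of_lt (lt_of_le_of_lt (min_le_right _ _) one_lt_top))]
              _ = 1 - (αn n).rnDeriv α x := by
                  rcases le_total ((αn n).rnDeriv α x) 1 with h | h
                  · rw [min_eq_left h]
                  · rw [min_eq_right h, tsub_self]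
                    exact (tsub_eq_zero_of_le h).symm
        _ ≤ ((αn n).toSignedMeasure - α.toSignedMeasure).totalVariation Set.univ :=
            lintegral_one_sub_rnDeriv_le (αn n) α
    exact tendsto_of_tendsto_of_tendsto_of_le_of_le tendsto_const_nhds hconv
      (fun n => zero_le) hb

end AuxMain

/-- If finite nonnegative Borel measures `α_n → α` in total variation
norm and `μ` is an `ℝ^N`-valued measure with `|μ| ≤ α`, then there exist `μ_n` with
`|μ_n| ≤ α_n` and `‖μ_n − μ‖_{M(Ω)^N} → 0`. -/
theorem stmt_10 {M N : ℕ} (Ω : Set (EuclideanSpace ℝ (Fin M))) (hΩ : IsOpen Ω)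
    (α : Measure Ω) [IsFiniteMeasure α]
    (αn : ℕ → Measure Ω) [∀ n, IsFiniteMeasure (αn n)]
    (hconv : Tendsto
      (fun n => ((αn n).toSignedMeasure - α.toSignedMeasure).totalVariation Set.univ)
      atTop (nhds 0))
    (μ : VectorMeasure Ω (EuclideanSpace ℝ (Fin N))) (hle : tvLE μ α) :
    ∃ μn : ℕ → VectorMeasure Ω (EuclideanSpace ℝ (Fin N)),
      (∀ n, tvLE (μn n) (αn n)) ∧
      Tendsto (fun n => tv (μn n - μ) Set.univ) atTop (nhds 0) :=
  stmt_10' Ω α αn hconv μ hle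

end
end

section
/- Let ψ : [a,b] → Ω̄ be a C¹ arc-length parametrized injective curve with ψ((a,b)) = C ⊂ Ω, and let μ be the ℝ^N-valued measure μ(B) = ∫_{B∩C} ψ′∘ψ⁻¹ dH¹. Then for every φ ∈ C¹ bounded with bounded gradient on Ω, ∫_Ω ∇φ · dμ = φ(ψ(b⁻)) − φ(ψ(a⁺)). -/
open MeasureTheory Filter Topology ENNReal NNReal

noncomputable section

/-! Auxiliary lemmas -/


theorem aux_coord {N : ℕ} (x : EuclideanSpace ℝ (Fin N)) (i : Fin N) : |x i| ≤ ‖x‖ := by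
  rw [EuclideanSpace.norm_eq]
  have h : |x i| = Real.sqrt (‖x i‖^2) := by rw [Real.sqrt_sq_eq_abs]; simp
  rw [h]
  apply Real.sqrt_le_sqrt
  exact Finset.single_le_sum (f := fun j => ‖x j‖^2) (fun j _ => by positivity) (Finset.mem_univ i)

theorem aux_lim_right (a b : ℝ) (hab : a < b) (G : ℝ → ℝ) (K : ℝ≥0)
    (h : LipschitzOnWith K G (Set.Ioo a b)) :
    ∃ L, Tendsto G (nhdsWithin a (Set.Ioi a)) (nhds L) := by
  obtain ⟨g, hg, heq⟩ := h.extend_real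
  refine ⟨g a, Tendsto.congr' ?_ ((hg.continuous.continuousAt).tendsto.mono_left nhdsWithin_le_nhds)⟩
  filter_upwards [Ioo_mem_nhdsGT hab] with t ht using (heq ht).symm

theorem aux_lim_left (a b : ℝ) (hab : a < b) (G : ℝ → ℝ) (K : ℝ≥0)
    (h : LipschitzOnWith K G (Set.Ioo a b)) :
    ∃ L, Tendsto G (nhdsWithin b (Set.Iio b)) (nhds L) := by
  obtain ⟨g, hg, heq⟩ := h.extend_real
  refine ⟨g b, Tendsto.congr' ?_ ((hg.continuous.continuousAt).tendsto.mono_left nhdsWithin_le_nhds)⟩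
  filter_upwards [Ioo_mem_nhdsLT hab] with t ht using (heq ht).symm

theorem aux_meas {N : ℕ} (a b : ℝ) (ψ : ℝ → EuclideanSpace ℝ (Fin N))
    (hψc : ContinuousOn ψ (Set.Icc a b)) (hinj : Set.InjOn ψ (Set.Icc a b)) :
    ∀ A : Set ℝ, A ⊆ Set.Ioo a b → MeasurableSet A → MeasurableSet (ψ '' A) := by
  intro A hA hAm
  have hcont : Continuous ((Set.Ioo a b).restrict ψ) :=
    continuousOn_iff_continuous_restrict.1 (hψc.mono Set.Ioo_subset_Icc_self)
  have hinj' : Function.Injective ((Set.Ioo a b).restrict ψ) := by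
    intro x y hxy
    exact Subtype.ext (hinj (Set.Ioo_subset_Icc_self x.2) (Set.Ioo_subset_Icc_self y.2) hxy)
  haveI : StandardBorelSpace (Set.Ioo a b) := (measurableSet_Ioo (a := a) (b := b)).standardBorel
  have M : MeasurableEmbedding ((Set.Ioo a b).restrict ψ) :=
    hcont.measurable.measurableEmbedding hinj'
  have himg : ψ '' A = (Set.Ioo a b).restrict ψ '' (Subtype.val ⁻¹' A) := by
    ext x; constructor
    · rintro ⟨t, ht, rfl⟩; exact ⟨⟨t, hA ht⟩, ht, rfl⟩
    · rintro ⟨⟨t, ht⟩, htA, rfl⟩; exact ⟨t, htA, rfl⟩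
  rw [himg]
  exact M.measurableSet_image' (measurable_subtype_coe hAm)

theorem aux_ginv {N : ℕ} (a b : ℝ) (ψ : ℝ → EuclideanSpace ℝ (Fin N))
    (hinj : Set.InjOn ψ (Set.Icc a b)) :
    ∀ t ∈ Set.Ioo a b, Function.invFunOn ψ (Set.Ioo a b) (ψ t) = t := by
  intro t ht
  have hex : ∃ s ∈ Set.Ioo a b, ψ s = ψ t := ⟨t, ht, rfl⟩
  exact hinj (Set.Ioo_subset_Icc_self (Function.invFunOn_mem hex))
    (Set.Ioo_subset_Icc_self ht) (Function.invFunOn_eq hex)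

theorem aux_expand {N : ℕ} (a b : ℝ) (ψ ψ' : ℝ → EuclideanSpace ℝ (Fin N))
    (hψd : ∀ t ∈ Set.Ioo a b, HasDerivAt ψ (ψ' t) t)
    (hψ'c : ContinuousOn ψ' (Set.Icc a b))
    (hunit : ∀ t ∈ Set.Icc a b, ‖ψ' t‖ = 1)
    (ε : ℝ) (hε : 0 < ε) :
    ∃ δ > 0, ∀ u ∈ Set.Ioo a b, ∀ v ∈ Set.Ioo a b, |u - v| ≤ δ →
      (1 - ε) * |u - v| ≤ ‖ψ u - ψ v‖ := by
  have hunif : UniformContinuousOn ψ' (Set.Icc a b) :=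
    isCompact_Icc.uniformContinuousOn_of_continuous hψ'c
  rw [Metric.uniformContinuousOn_iff] at hunif
  obtain ⟨δ, hδ, hmod⟩ := hunif (ε/2) (by linarith)
  refine ⟨δ/2, by linarith, ?_⟩
  have key : ∀ u ∈ Set.Ioo a b, ∀ v ∈ Set.Ioo a b, u ≤ v → v - u ≤ δ/2 →
      (1 - ε) * (v - u) ≤ ‖ψ v - ψ u‖ := by
    intro u hu v hv huv hd
    have hsub : Set.Icc u v ⊆ Set.Ioo a b := fun x hx => ⟨lt_of_lt_of_le hu.1 hx.1, lt_of_le_of_lt hx.2 hv.2⟩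
    have hsub' : Set.Icc u v ⊆ Set.Icc a b := hsub.trans Set.Ioo_subset_Icc_self
    have hint : IntervalIntegrable ψ' volume u v :=
      (hψ'c.mono (by rwa [Set.uIcc_of_le huv])).intervalIntegrable
    have hftc : ∫ y in u..v, ψ' y = ψ v - ψ u := by
      apply intervalIntegral.integral_eq_sub_of_hasDerivAt
      · intro x hx; rw [Set.uIcc_of_le huv] at hx; exact hψd x (hsub hx)
      · exact hint
    have hconst : ∫ y in u..v, ψ' u = (v - u) • ψ' u := by simp
    have hdiff : ψ v - ψ u - (v - u) • ψ' u = ∫ y in u..v, (ψ' y - ψ' u) := by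
      rw [intervalIntegral.integral_sub hint intervalIntegrable_const, hftc, hconst]
    have hbound : ‖∫ y in u..v, (ψ' y - ψ' u)‖ ≤ (ε/2) * |v - u| := by
      apply intervalIntegral.norm_integral_le_of_norm_le_const
      intro x hx
      rw [Set.uIoc_of_le huv] at hx
      have hxm : x ∈ Set.Icc a b := hsub' ⟨le_of_lt hx.1, hx.2⟩
      have hum : u ∈ Set.Icc a b := hsub' ⟨le_refl u, huv⟩
      have := hmod x hxm u hum (by rw [Real.dist_eq]; rw [abs_lt]; constructor <;> [linarith [hx.1, hx.2, hd]; linarith [hx.1, hx.2, hd]])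
      rw [dist_eq_norm] at this
      exact le_of_lt this
    have h1 : ‖(v - u) • ψ' u‖ = v - u := by
      rw [norm_smul, hunit u (hsub' ⟨le_refl u, huv⟩)]
      simp [abs_of_nonneg (by linarith : (0:ℝ) ≤ v - u)]
    have := norm_sub_norm_le ((v-u) • ψ' u) (ψ v - ψ u)
    rw [norm_sub_rev ((v - u) • ψ' u) (ψ v - ψ u)] at this
    have h2 : ‖ψ v - ψ u - (v - u) • ψ' u‖ ≤ (ε/2) * (v - u) := by
      rw [hdiff]
      calc ‖∫ y in u..v, (ψ' y - ψ' u)‖ ≤ (ε/2) * |v - u| := hbound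
        _ = (ε/2) * (v - u) := by rw [abs_of_nonneg (by linarith)]
    nlinarith [norm_nonneg (ψ v - ψ u), mul_nonneg hε.le (sub_nonneg.2 huv)]
  intro u hu v hv hd
  rcases le_total u v with h | h
  · have := key u hu v hv h (by rw [abs_sub_comm] at hd; rwa [abs_of_nonneg (by linarith)] at hd)
    rw [abs_sub_comm, abs_of_nonneg (by linarith)]
    rwa [norm_sub_rev]
  · have := key v hv u hu h (by rwa [abs_of_nonneg (by linarith)] at hd)
    rwa [abs_of_nonneg (by linarith)]

theorem aux_lower {N : ℕ} (a b : ℝ) (hab : a < b) (ψ ψ' : ℝ → EuclideanSpace ℝ (Fin N))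
    (hψd : ∀ t ∈ Set.Ioo a b, HasDerivAt ψ (ψ' t) t)
    (hψ'c : ContinuousOn ψ' (Set.Icc a b))
    (hunit : ∀ t ∈ Set.Icc a b, ‖ψ' t‖ = 1)
    (hinj : Set.InjOn ψ (Set.Icc a b))
    (hmeas : ∀ A : Set ℝ, A ⊆ Set.Ioo a b → MeasurableSet A → MeasurableSet (ψ '' A)) :
    ENNReal.ofReal (b - a) ≤ μH[1] (ψ '' Set.Ioo a b) := by
  set g := Function.invFunOn ψ (Set.Ioo a b) with hgdef
  have hg : ∀ t ∈ Set.Ioo a b, g (ψ t) = t := by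
    intro t ht
    have hex : ∃ s ∈ Set.Ioo a b, ψ s = ψ t := ⟨t, ht, rfl⟩
    have h1 : g (ψ t) ∈ Set.Ioo a b := Function.invFunOn_mem hex
    have h2 : ψ (g (ψ t)) = ψ t := Function.invFunOn_eq hex
    exact hinj (Set.Ioo_subset_Icc_self h1) (Set.Ioo_subset_Icc_self ht) h2
  have main : ∀ ε : ℝ, 0 < ε → ε < 1 → ∀ s t : ℝ, a < s → s < t → t < b →
      ENNReal.ofReal ((1 - ε) * (t - s)) ≤ μH[1] (ψ '' Set.Ioo a b) := by
    intro ε hε hε1 s t has hst htb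
    obtain ⟨δ, hδ, hL1⟩ := aux_expand a b ψ ψ' hψd hψ'c hunit ε hε
    obtain ⟨n, hn⟩ := exists_nat_gt ((t - s)/δ)
    have hn0 : 0 < n := by
      by_contra hcon
      push_neg at hcon
      interval_cases n
      simp only [Nat.cast_zero] at hn
      nlinarith [div_pos (by linarith : (0:ℝ) < t - s) hδ]
    have hn' : (0:ℝ) < n := by exact_mod_cast hn0
    set h := (t - s)/n with hhdef
    have hh0 : 0 < h := div_pos (by linarith) hn'
    have hnh : (n:ℝ) * h = t - s := by rw [hhdef]; field_simp
    have hhδ : h ≤ δ := by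
      rw [div_lt_iff₀ hδ] at hn
      rw [hhdef, div_le_iff₀ hn']
      nlinarith
    set p : ℕ → ℝ := fun i => s + i * h with hpdef
    have hmono : ∀ i : ℕ, p i < p (i+1) := by
      intro i; simp only [hpdef]; push_cast; nlinarith
    have hple : ∀ i j : ℕ, i ≤ j → p i ≤ p j := by
      intro i j hij
      simp only [hpdef]
      have : (i:ℝ) ≤ j := by exact_mod_cast hij
      nlinarith
    have hrange : ∀ i : ℕ, i ≤ n → s ≤ p i ∧ p i ≤ t := by
      intro i hi
      have hin : (i:ℝ) ≤ n := by exact_mod_cast hi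
      constructor
      · simp only [hpdef]; nlinarith [Nat.cast_nonneg (α := ℝ) i]
      · have := hple i n hi
        simp only [hpdef] at this ⊢
        nlinarith
    have hIoosub : ∀ i : ℕ, i < n → Set.Ioo (p i) (p (i+1)) ⊆ Set.Ioo a b := by
      intro i hi x hx
      obtain ⟨h1, _⟩ := hrange i hi.le
      obtain ⟨_, h2⟩ := hrange (i+1) hi
      exact ⟨by linarith [hx.1], by linarith [hx.2]⟩
    -- L2 : lower bound for each piece
    have piece : ∀ i : ℕ, i < n →
        ENNReal.ofReal ((1-ε) * h) ≤ μH[1] (ψ '' Set.Ioo (p i) (p (i+1))) := by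
      intro i hi
      set u := p i
      set v := p (i+1)
      have huv : v - u = h := by simp only [u, v, hpdef]; push_cast; ring
      have hsub : Set.Ioo u v ⊆ Set.Ioo a b := hIoosub i hi
      set S := ψ '' Set.Ioo u v with hSdef
      set Kε : ℝ≥0 := Real.toNNReal ((1-ε)⁻¹) with hKdef
      have h1ε : (0:ℝ) < 1 - ε := by linarith
      have hKg : LipschitzOnWith Kε g S := by
        apply LipschitzOnWith.of_dist_le_mul
        rintro x ⟨px, hpx, rfl⟩ y ⟨py, hpy, rfl⟩
        rw [hg px (hsub hpx), hg py (hsub hpy)]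
        have hdd : |px - py| ≤ δ := by
          rw [abs_le]
          constructor <;> nlinarith [hpx.1, hpx.2, hpy.1, hpy.2, huv, hhδ]
        have := hL1 px (hsub hpx) py (hsub hpy) hdd
        rw [Real.dist_eq, dist_eq_norm]
        rw [Real.coe_toNNReal _ (inv_nonneg.2 h1ε.le)]
        have h2 := mul_le_mul_of_nonneg_left this (inv_nonneg.2 h1ε.le)
        rw [← mul_assoc, inv_mul_cancel₀ h1ε.ne', one_mul] at h2
        exact h2
      have himg : g '' S = Set.Ioo u v := by
        apply Set.Subset.antisymm
        · rintro _ ⟨x, ⟨px, hpx, rfl⟩, rfl⟩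
          rw [hg px (hsub hpx)]; exact hpx
        · intro x hx
          exact ⟨ψ x, ⟨x, hx, rfl⟩, hg x (hsub hx)⟩
      have hchain : ENNReal.ofReal (v - u) ≤ (Kε : ℝ≥0∞) ^ (1:ℝ) * μH[1] S := by
        calc ENNReal.ofReal (v - u) = volume (Set.Ioo u v) := (Real.volume_Ioo).symm
          _ = μH[1] (Set.Ioo u v) := by rw [MeasureTheory.hausdorffMeasure_real]
          _ = μH[1] (g '' S) := by rw [himg]
          _ ≤ (Kε : ℝ≥0∞) ^ (1:ℝ) * μH[1] S := hKg.hausdorffMeasure_image_le zero_le_one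
      have hcancel : ENNReal.ofReal (1-ε) * (Kε : ℝ≥0∞) = 1 := by
        have : ENNReal.ofReal (1-ε) = ((Real.toNNReal (1-ε)) : ℝ≥0∞) := rfl
        rw [this, hKdef, ← ENNReal.coe_mul, ← Real.toNNReal_mul h1ε.le,
          mul_inv_cancel₀ h1ε.ne', Real.toNNReal_one, ENNReal.coe_one]
      calc ENNReal.ofReal ((1-ε) * h)
          = ENNReal.ofReal (1-ε) * ENNReal.ofReal h := ENNReal.ofReal_mul h1ε.le
        _ = ENNReal.ofReal (1-ε) * ENNReal.ofReal (v - u) := by rw [huv]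
        _ ≤ ENNReal.ofReal (1-ε) * ((Kε : ℝ≥0∞) ^ (1:ℝ) * μH[1] S) :=
            mul_le_mul_right hchain _
        _ = (ENNReal.ofReal (1-ε) * (Kε : ℝ≥0∞)) * μH[1] S := by
            rw [ENNReal.rpow_one]; ring
        _ = μH[1] S := by rw [hcancel, one_mul]
    -- disjoint union
    have hdisj : Set.PairwiseDisjoint (↑(Finset.range n))
        (fun i => ψ '' Set.Ioo (p i) (p (i+1))) := by
      intro i hi j hj hij
      have key : ∀ i j : ℕ, i < j → j < n →
          Disjoint (ψ '' Set.Ioo (p i) (p (i+1))) (ψ '' Set.Ioo (p j) (p (j+1))) := by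
        intro i j hij hjn
        rw [Set.disjoint_iff_inter_eq_empty]
        rw [← Set.InjOn.image_inter hinj
          ((hIoosub i (hij.trans hjn)).trans Set.Ioo_subset_Icc_self)
          ((hIoosub j hjn).trans Set.Ioo_subset_Icc_self)]
        have : Set.Ioo (p i) (p (i+1)) ∩ Set.Ioo (p j) (p (j+1)) = ∅ := by
          apply Set.eq_empty_of_forall_notMem
          intro x ⟨hx1, hx2⟩
          have := hple (i+1) j hij
          exact absurd (hx1.2.trans_le this) (not_lt.2 hx2.1.le)
        rw [this, Set.image_empty]
      simp only [Finset.coe_range, Set.mem_Iio] at hi hj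
      rcases lt_or_gt_of_ne hij with hlt | hgt
      · exact key i j hlt hj
      · exact (key j i hgt hi).symm
    have hmeas' : ∀ i : ℕ, i < n → MeasurableSet (ψ '' Set.Ioo (p i) (p (i+1))) := by
      intro i hi
      exact hmeas _ (hIoosub i hi) measurableSet_Ioo
    have hsum : ∑ i ∈ Finset.range n, μH[1] (ψ '' Set.Ioo (p i) (p (i+1)))
        = μH[1] (⋃ i ∈ Finset.range n, ψ '' Set.Ioo (p i) (p (i+1))) := by
      rw [measure_biUnion_finset hdisj (fun i hi => hmeas' i (Finset.mem_range.1 hi))]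
    have hunion : (⋃ i ∈ Finset.range n, ψ '' Set.Ioo (p i) (p (i+1))) ⊆ ψ '' Set.Ioo a b := by
      intro x hx
      simp only [Set.mem_iUnion] at hx
      obtain ⟨i, hi, hx⟩ := hx
      exact Set.image_mono (hIoosub i (Finset.mem_range.1 hi)) hx
    calc ENNReal.ofReal ((1-ε)*(t-s)) = ENNReal.ofReal ((n:ℝ) * ((1-ε)*h)) := by
          rw [← hnh]; ring_nf
      _ = ENNReal.ofReal (n:ℝ) * ENNReal.ofReal ((1-ε)*h) := ENNReal.ofReal_mul (Nat.cast_nonneg n)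
      _ = (n : ℝ≥0∞) * ENNReal.ofReal ((1-ε)*h) := by rw [ENNReal.ofReal_natCast]
      _ = ∑ _i ∈ Finset.range n, ENNReal.ofReal ((1-ε)*h) := by
          rw [Finset.sum_const, Finset.card_range, nsmul_eq_mul]
      _ ≤ ∑ i ∈ Finset.range n, μH[1] (ψ '' Set.Ioo (p i) (p (i+1))) :=
          Finset.sum_le_sum (fun i hi => piece i (Finset.mem_range.1 hi))
      _ = μH[1] (⋃ i ∈ Finset.range n, ψ '' Set.Ioo (p i) (p (i+1))) := hsum
      _ ≤ μH[1] (ψ '' Set.Ioo a b) := measure_mono hunion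
  -- limit argument
  have Q : ∀ η : ℝ, 0 < η → η < b - a → ENNReal.ofReal (b - a - η) ≤ μH[1] (ψ '' Set.Ioo a b) := by
    intro η hη hηab
    set ε := η / (2*(b-a)) with hεdef
    have hba : (0:ℝ) < b - a := by linarith
    have hε : 0 < ε := div_pos hη (by linarith)
    have hε1 : ε < 1 := by
      rw [hεdef, div_lt_one (by linarith)]; linarith
    have key := main ε hε hε1 (a + η/4) (b - η/4) (by linarith) (by linarith) (by linarith)
    refine le_trans (ENNReal.ofReal_le_ofReal ?_) key
    have hεba : ε * (b-a) = η/2 := by rw [hεdef]; field_simp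
    nlinarith [mul_nonneg hε.le hη.le]
  have tend : Tendsto (fun k : ℕ => ENNReal.ofReal (b - a - (b-a)/(k+2))) atTop
      (𝓝 (ENNReal.ofReal (b - a))) := by
    apply (ENNReal.continuous_ofReal.tendsto _).comp
    have h1 : Tendsto (fun k : ℕ => (b-a)/(k+2)) atTop (𝓝 0) := by
      apply Tendsto.div_atTop tendsto_const_nhds
      exact Filter.tendsto_atTop_add_const_right _ 2 tendsto_natCast_atTop_atTop
    have := h1.const_sub (b - a)
    simpa using this
  apply le_of_tendsto tend
  filter_upwards with k
  apply Q
  · apply div_pos (by linarith) (by positivity)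
  · rw [div_lt_iff₀ (by positivity)]
    nlinarith [Nat.cast_nonneg (α := ℝ) k, hab]

theorem aux_eqmeas {X : Type*} [MeasurableSpace X] (ρ σ : Measure X) [IsFiniteMeasure σ]
    (hle : ∀ B, MeasurableSet B → ρ B ≤ σ B) (huniv : σ Set.univ ≤ ρ Set.univ) : ρ = σ := by
  ext B hB
  refine le_antisymm (hle B hB) ?_
  have h1 : σ B + σ Bᶜ = σ Set.univ := measure_add_measure_compl hB
  have h2 : ρ B + ρ Bᶜ = ρ Set.univ := measure_add_measure_compl hB
  have h3 : σ B + σ Bᶜ ≤ ρ B + σ Bᶜ := by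
    calc σ B + σ Bᶜ = σ Set.univ := h1
      _ ≤ ρ Set.univ := huniv
      _ = ρ B + ρ Bᶜ := h2.symm
      _ ≤ ρ B + σ Bᶜ := add_le_add le_rfl (hle Bᶜ hB.compl)
  exact (ENNReal.add_le_add_iff_right (measure_ne_top σ Bᶜ)).1 h3

theorem aux_key {N : ℕ} (a b : ℝ) (hab : a < b) (ψ ψ' : ℝ → EuclideanSpace ℝ (Fin N))
    (hψc : ContinuousOn ψ (Set.Icc a b))
    (hψd : ∀ t ∈ Set.Ioo a b, HasDerivAt ψ (ψ' t) t)
    (hψ'c : ContinuousOn ψ' (Set.Icc a b))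
    (hunit : ∀ t ∈ Set.Icc a b, ‖ψ' t‖ = 1)
    (hinj : Set.InjOn ψ (Set.Icc a b)) :
    (μH[1] : Measure (EuclideanSpace ℝ (Fin N))).restrict (ψ '' Set.Ioo a b)
      = Measure.map ψ (volume.restrict (Set.Ioo a b)) := by
  have hψae : AEMeasurable ψ (volume.restrict (Set.Ioo a b)) :=
    (hψc.mono Set.Ioo_subset_Icc_self).aemeasurable measurableSet_Ioo
  have hlip : LipschitzOnWith 1 ψ (Set.Ioo a b) := by
    apply Convex.lipschitzOnWith_of_nnnorm_hasDerivWithin_le (convex_Ioo a b)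
      (fun x hx => (hψd x hx).hasDerivWithinAt)
    intro x hx
    have := hunit x (Set.Ioo_subset_Icc_self hx)
    rw [← NNReal.coe_le_coe, coe_nnnorm, this, NNReal.coe_one]
  have huniv : Measure.map ψ (volume.restrict (Set.Ioo a b)) Set.univ = ENNReal.ofReal (b - a) := by
    rw [Measure.map_apply_of_aemeasurable hψae MeasurableSet.univ, Set.preimage_univ,
      Measure.restrict_apply_univ, Real.volume_Ioo]
  haveI : IsFiniteMeasure (Measure.map ψ (volume.restrict (Set.Ioo a b))) := by
    constructor
    rw [huniv]
    exact ENNReal.ofReal_lt_top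
  apply aux_eqmeas
  · intro B hB
    rw [Measure.restrict_apply hB,
      Measure.map_apply_of_aemeasurable hψae hB, Measure.restrict_apply' measurableSet_Ioo]
    have hBC : B ∩ ψ '' Set.Ioo a b = ψ '' (Set.Ioo a b ∩ ψ ⁻¹' B) := by
      rw [Set.image_inter_preimage, Set.inter_comm]
    rw [hBC]
    calc μH[1] (ψ '' (Set.Ioo a b ∩ ψ ⁻¹' B))
        ≤ (1:ℝ≥0) ^ (1:ℝ) * μH[1] (Set.Ioo a b ∩ ψ ⁻¹' B) :=
          (hlip.mono Set.inter_subset_left).hausdorffMeasure_image_le zero_le_one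
      _ = μH[1] (Set.Ioo a b ∩ ψ ⁻¹' B) := by
          rw [ENNReal.coe_one, ENNReal.one_rpow, one_mul]
      _ = volume (Set.Ioo a b ∩ ψ ⁻¹' B) := by rw [MeasureTheory.hausdorffMeasure_real]
      _ = volume (ψ ⁻¹' B ∩ Set.Ioo a b) := by rw [Set.inter_comm]
  · rw [huniv, Measure.restrict_apply_univ]
    exact aux_lower a b hab ψ ψ' hψd hψ'c hunit hinj (aux_meas a b ψ hψc hinj)

theorem aux_Fmeas {N : ℕ} (a b : ℝ) (ψ ψ' : ℝ → EuclideanSpace ℝ (Fin N))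
    (hψc : ContinuousOn ψ (Set.Icc a b))
    (hψ'c : ContinuousOn ψ' (Set.Icc a b))
    (hinj : Set.InjOn ψ (Set.Icc a b)) :
    Measurable ((ψ '' Set.Ioo a b).indicator
      (fun x => ψ' (Function.invFunOn ψ (Set.Ioo a b) x))) := by
  set C := ψ '' Set.Ioo a b with hCdef
  set g := Function.invFunOn ψ (Set.Ioo a b) with hgdef
  have hCmeas : MeasurableSet C :=
    aux_meas a b ψ hψc hinj _ Set.Subset.rfl measurableSet_Ioo
  intro S hS
  have hT : MeasurableSet (Set.Ioo a b ∩ ψ' ⁻¹' S) := by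
    have hr : Measurable ((Set.Ioo a b).restrict ψ') :=
      (continuousOn_iff_continuous_restrict.1 (hψ'c.mono Set.Ioo_subset_Icc_self)).measurable
    have : Set.Ioo a b ∩ ψ' ⁻¹' S = Subtype.val '' ((Set.Ioo a b).restrict ψ' ⁻¹' S) := by
      ext x; constructor
      · rintro ⟨hx, hxS⟩; exact ⟨⟨x, hx⟩, hxS, rfl⟩
      · rintro ⟨⟨y, hy⟩, hyS, rfl⟩; exact ⟨hy, hyS⟩
    rw [this]
    exact (measurableSet_Ioo (a := a) (b := b)).subtype_image (hr hS)
  have hTim : MeasurableSet (ψ '' (Set.Ioo a b ∩ ψ' ⁻¹' S)) :=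
    aux_meas a b ψ hψc hinj _ Set.inter_subset_left hT
  have hinC : C ∩ (fun x => ψ' (g x)) ⁻¹' S = ψ '' (Set.Ioo a b ∩ ψ' ⁻¹' S) := by
    ext x; constructor
    · rintro ⟨⟨t, ht, rfl⟩, hxS⟩
      rw [Set.mem_preimage, hgdef, aux_ginv a b ψ hinj t ht] at hxS
      exact ⟨t, ⟨ht, hxS⟩, rfl⟩
    · rintro ⟨t, ⟨ht, htS⟩, rfl⟩
      refine ⟨⟨t, ht, rfl⟩, ?_⟩
      rw [Set.mem_preimage, hgdef, aux_ginv a b ψ hinj t ht]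
      exact htS
  by_cases h0 : (0 : EuclideanSpace ℝ (Fin N)) ∈ S
  · have : (C.indicator fun x => ψ' (g x)) ⁻¹' S
        = ψ '' (Set.Ioo a b ∩ ψ' ⁻¹' S) ∪ Cᶜ := by
      rw [← hinC]
      ext x
      by_cases hx : x ∈ C <;> simp [Set.indicator_of_mem, Set.indicator_of_notMem, hx, h0]
    rw [this]
    exact hTim.union hCmeas.compl
  · have : (C.indicator fun x => ψ' (g x)) ⁻¹' S = ψ '' (Set.Ioo a b ∩ ψ' ⁻¹' S) := by
      rw [← hinC]
      ext x
      by_cases hx : x ∈ C <;> simp [Set.indicator_of_mem, Set.indicator_of_notMem, hx, h0]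
    rw [this]
    exact hTim

theorem aux_sInt {X : Type*} [MeasurableSpace X] (ν : Measure X) [IsFiniteMeasure ν]
    (f : X → ℝ) (hf : Measurable f) (hfb : ∀ x, |f x| ≤ 1)
    (s : SignedMeasure X) (hs : s = ν.withDensityᵥ f)
    (h : X → ℝ) (hh : Integrable h ν) :
    sInt s h = ∫ x, f x * h x ∂ν := by
  have hfi : Integrable f ν :=
    (integrable_const (1:ℝ)).mono' hf.aestronglyMeasurable
      (Filter.Eventually.of_forall (fun x => by simpa using hfb x))
  have hJD := MeasureTheory.SignedMeasure.toJordanDecomposition_eq_of_eq_add_withDensity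
    (t := 0) (s := s) (μ := ν) hf hfi (VectorMeasure.MutuallySingular.zero_left)
    (by rw [hs, zero_add])
  rw [sInt, hJD]
  have hofr : ∀ r : ℝ, ENNReal.ofReal r = ((Real.toNNReal r : ℝ≥0) : ℝ≥0∞) := fun _ => rfl
  have e1 : ∫ x, h x ∂((0 : SignedMeasure X).toJordanDecomposition.posPart
        + ν.withDensity fun x => ENNReal.ofReal (f x))
      = ∫ x, ((f x).toNNReal : ℝ) * h x ∂ν := by
    rw [MeasureTheory.SignedMeasure.toJordanDecomposition_zero,
      MeasureTheory.JordanDecomposition.zero_posPart, zero_add]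
    have : (fun x => ENNReal.ofReal (f x)) = (fun x => (((fun y => (f y).toNNReal) x : ℝ≥0) : ℝ≥0∞)) := rfl
    rw [this, integral_withDensity_eq_integral_smul hf.real_toNNReal]
    simp [NNReal.smul_def]
  have e2 : ∫ x, h x ∂((0 : SignedMeasure X).toJordanDecomposition.negPart
        + ν.withDensity fun x => ENNReal.ofReal (-f x))
      = ∫ x, ((-f x).toNNReal : ℝ) * h x ∂ν := by
    rw [MeasureTheory.SignedMeasure.toJordanDecomposition_zero,
      MeasureTheory.JordanDecomposition.zero_negPart, zero_add]
    have : (fun x => ENNReal.ofReal (-f x)) = (fun x => (((fun y => (-f y).toNNReal) x : ℝ≥0) : ℝ≥0∞)) := rfl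
    rw [this, integral_withDensity_eq_integral_smul (by exact hf.neg.real_toNNReal : Measurable fun y => (-f y).toNNReal)]
    simp [NNReal.smul_def]
  rw [e1, e2]
  have hb1 : Integrable (fun x => ((f x).toNNReal : ℝ) * h x) ν := by
    apply hh.abs.mono' ((hf.real_toNNReal.coe_nnreal_real).aestronglyMeasurable.mul
      hh.aestronglyMeasurable)
    filter_upwards with x
    simp only [Pi.mul_apply, norm_mul, Real.norm_eq_abs]
    have h1 : |((f x).toNNReal : ℝ)| ≤ 1 := by
      rw [abs_of_nonneg (f x).toNNReal.coe_nonneg, Real.coe_toNNReal']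
      rcases le_total 0 (f x) with hx | hx
      · rw [max_eq_left hx]; exact (abs_of_nonneg hx ▸ hfb x)
      · rw [max_eq_right hx]; norm_num
    nlinarith [abs_nonneg (h x), abs_nonneg (f x).toNNReal.1]
  have hb2 : Integrable (fun x => ((-f x).toNNReal : ℝ) * h x) ν := by
    apply hh.abs.mono' ((hf.neg.real_toNNReal.coe_nnreal_real).aestronglyMeasurable.mul
      hh.aestronglyMeasurable)
    filter_upwards with x
    simp only [Pi.mul_apply, norm_mul, Real.norm_eq_abs]
    have h1 : |((-f x).toNNReal : ℝ)| ≤ 1 := by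
      rw [abs_of_nonneg (-f x).toNNReal.coe_nonneg, Real.coe_toNNReal']
      rcases le_total 0 (-f x) with hx | hx
      · rw [max_eq_left hx]
        have := hfb x
        rw [abs_le] at this
        linarith
      · rw [max_eq_right hx]; norm_num
    have h1' : |(((-f) x).toNNReal : ℝ)| ≤ 1 := h1
    nlinarith [abs_nonneg (h x), abs_nonneg (-f x).toNNReal.1]
  rw [← integral_sub hb1 hb2]
  apply integral_congr_ae
  filter_upwards with x
  have : ((f x).toNNReal : ℝ) - ((-f x).toNNReal : ℝ) = f x := by
    rw [Real.coe_toNNReal', Real.coe_toNNReal']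
    rcases le_total 0 (f x) with hx | hx
    · rw [max_eq_left hx, max_eq_right (neg_nonpos.2 hx), sub_zero]
    · rw [max_eq_right hx, max_eq_left (neg_nonneg.2 hx), zero_sub, neg_neg]
  calc ((f x).toNNReal : ℝ) * h x - ((-f x).toNNReal : ℝ) * h x
      = (((f x).toNNReal : ℝ) - ((-f x).toNNReal : ℝ)) * h x := by ring
    _ = f x * h x := by rw [this]

set_option maxHeartbeats 2000000 in
/-- Let `ψ : [a,b] → Ω̄` be a `C¹` arc-length parametrized injective
curve with `ψ((a,b)) = C ⊂ Ω`, and let `μ(B) = ∫_{B∩C} ψ′∘ψ⁻¹ dH¹`. Then for every `C¹`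
function `φ` bounded with bounded gradient on `Ω`,
`∫_Ω ∇φ·dμ = φ(ψ(b⁻)) − φ(ψ(a⁺))` (limits along the curve). -/
theorem stmt_11 {N : ℕ} (Ω : Set (EuclideanSpace ℝ (Fin N))) (hΩ : IsOpen Ω)
    (a b : ℝ) (hab : a < b)
    (ψ : ℝ → EuclideanSpace ℝ (Fin N)) (ψ' : ℝ → EuclideanSpace ℝ (Fin N))
    (hψc : ContinuousOn ψ (Set.Icc a b))
    (hψd : ∀ t ∈ Set.Ioo a b, HasDerivAt ψ (ψ' t) t)
    (hψ'c : ContinuousOn ψ' (Set.Icc a b))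
    (hunit : ∀ t ∈ Set.Icc a b, ‖ψ' t‖ = 1)
    (hinj : Set.InjOn ψ (Set.Icc a b))
    (hC : ψ '' Set.Ioo a b ⊆ Ω)
    (hend : ψ a ∈ closure Ω ∧ ψ b ∈ closure Ω)
    (μ : VectorMeasure (EuclideanSpace ℝ (Fin N)) (EuclideanSpace ℝ (Fin N)))
    (hμ : ∀ B : Set (EuclideanSpace ℝ (Fin N)), MeasurableSet B →
      μ B = ∫ x in B ∩ ψ '' Set.Ioo a b,
        ψ' (Function.invFunOn ψ (Set.Ioo a b) x) ∂(μH[1]))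
    (φ : EuclideanSpace ℝ (Fin N) → ℝ)
    (hφd : ∀ x ∈ Ω, DifferentiableAt ℝ φ x)
    (hφg : ContinuousOn (fun x => gradient φ x) Ω)
    (hφb : ∃ C : ℝ, ∀ x ∈ Ω, |φ x| ≤ C)
    (hφgb : ∃ C : ℝ, ∀ x ∈ Ω, ‖gradient φ x‖ ≤ C) :
    ∃ La Lb : ℝ,
      Tendsto (fun t => φ (ψ t)) (nhdsWithin a (Set.Ioi a)) (nhds La) ∧
      Tendsto (fun t => φ (ψ t)) (nhdsWithin b (Set.Iio b)) (nhds Lb) ∧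
      vInt μ (fun x => gradient φ x) = Lb - La := by
  classical
  obtain ⟨Cg, hCg⟩ := hφgb
  set K : ℝ≥0 := Cg.toNNReal with hKdef
  have hCgK : ∀ x ∈ Ω, ‖gradient φ x‖ ≤ (K : ℝ) := by
    intro x hx
    exact (hCg x hx).trans (Real.le_coe_toNNReal Cg)
  -- the derivative of φ ∘ ψ
  set d : ℝ → ℝ := fun t => (inner ℝ (gradient φ (ψ t)) (ψ' t) : ℝ) with hddef
  have hmem : ∀ t ∈ Set.Ioo a b, ψ t ∈ Ω := fun t ht => hC ⟨t, ht, rfl⟩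
  have hGd : ∀ t ∈ Set.Ioo a b, HasDerivAt (fun t => φ (ψ t)) (d t) t := by
    intro t ht
    have h1 : HasGradientAt φ (gradient φ (ψ t)) (ψ t) :=
      (hφd (ψ t) (hmem t ht)).hasGradientAt
    have h2 : HasFDerivAt φ ((InnerProductSpace.toDual ℝ _) (gradient φ (ψ t))) (ψ t) :=
      hasGradientAt_iff_hasFDerivAt.1 h1
    have h3 := h2.comp_hasDerivAt t (hψd t ht)
    simpa [hddef, InnerProductSpace.toDual_apply_apply, Function.comp_def] using h3
  have hdbound : ∀ t ∈ Set.Ioo a b, |d t| ≤ (K : ℝ) := by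
    intro t ht
    calc |d t| ≤ ‖gradient φ (ψ t)‖ * ‖ψ' t‖ := abs_real_inner_le_norm _ _
      _ = ‖gradient φ (ψ t)‖ := by rw [hunit t (Set.Ioo_subset_Icc_self ht), mul_one]
      _ ≤ (K : ℝ) := hCgK _ (hmem t ht)
  have hGlip : LipschitzOnWith K (fun t => φ (ψ t)) (Set.Ioo a b) := by
    apply Convex.lipschitzOnWith_of_nnnorm_hasDerivWithin_le (convex_Ioo a b)
      (fun x hx => (hGd x hx).hasDerivWithinAt)
    intro x hx
    rw [← NNReal.coe_le_coe, coe_nnnorm, Real.norm_eq_abs]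
    exact hdbound x hx
  obtain ⟨La, hLa⟩ := aux_lim_right a b hab _ K hGlip
  obtain ⟨Lb, hLb⟩ := aux_lim_left a b hab _ K hGlip
  refine ⟨La, Lb, hLa, hLb, ?_⟩
  -- notation
  set C : Set (EuclideanSpace ℝ (Fin N)) := ψ '' Set.Ioo a b with hCdef
  set g : EuclideanSpace ℝ (Fin N) → ℝ := Function.invFunOn ψ (Set.Ioo a b) with hgdef
  set F : EuclideanSpace ℝ (Fin N) → EuclideanSpace ℝ (Fin N) :=
    C.indicator (fun x => ψ' (g x)) with hFdef
  set ν : Measure (EuclideanSpace ℝ (Fin N)) := (μH[1]).restrict C with hνdef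
  have hCmeas : MeasurableSet C := aux_meas a b ψ hψc hinj _ Set.Subset.rfl measurableSet_Ioo
  have hψae : AEMeasurable ψ (volume.restrict (Set.Ioo a b)) :=
    (hψc.mono Set.Ioo_subset_Icc_self).aemeasurable measurableSet_Ioo
  have key : ν = Measure.map ψ (volume.restrict (Set.Ioo a b)) :=
    aux_key a b hab ψ ψ' hψc hψd hψ'c hunit hinj
  have hνuniv : ν Set.univ = ENNReal.ofReal (b - a) := by
    rw [key, Measure.map_apply_of_aemeasurable hψae MeasurableSet.univ, Set.preimage_univ,
      Measure.restrict_apply_univ, Real.volume_Ioo]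
  haveI hνfin : IsFiniteMeasure ν := by
    constructor; rw [hνuniv]; exact ENNReal.ofReal_lt_top
  have hFmeas : Measurable F := aux_Fmeas a b ψ ψ' hψc hψ'c hinj
  have hFbound : ∀ x, ‖F x‖ ≤ 1 := by
    intro x
    rw [hFdef]
    by_cases hx : x ∈ C
    · rw [Set.indicator_of_mem hx]
      have h1 : g x ∈ Set.Ioo a b := by
        obtain ⟨t, ht, rfl⟩ := hx
        rw [hgdef, aux_ginv a b ψ hinj t ht]; exact ht
      rw [hunit _ (Set.Ioo_subset_Icc_self h1)]
    · rw [Set.indicator_of_notMem hx]; simp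
  have hFint : Integrable F ν :=
    (integrable_const (1:ℝ)).mono' hFmeas.aestronglyMeasurable
      (Filter.Eventually.of_forall hFbound)
  -- μ = withDensityᵥ
  have hμeq : μ = ν.withDensityᵥ F := by
    apply VectorMeasure.ext
    intro B hB
    rw [hμ B hB, MeasureTheory.withDensityᵥ_apply hFint hB]
    have h1 : ν.restrict B = (μH[1]).restrict (B ∩ C) := by
      rw [hνdef, Measure.restrict_restrict hB]
    rw [h1]
    apply MeasureTheory.setIntegral_congr_fun (hB.inter hCmeas)
    intro x hx
    rw [hFdef, Set.indicator_of_mem hx.2]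
  have hμB : ∀ B, MeasurableSet B → μ B = ∫ x in B, F x ∂ν := by
    intro B hB
    rw [hμeq, MeasureTheory.withDensityᵥ_apply hFint hB]
  -- components
  have hFi_int : ∀ i : Fin N, Integrable (fun x => F x i) ν := by
    intro i
    have := (EuclideanSpace.proj (𝕜 := ℝ) i).integrable_comp hFint
    simpa using this
  have hcomp : ∀ i : Fin N, comp μ i = ν.withDensityᵥ (fun x => F x i) := by
    intro i
    apply VectorMeasure.ext
    intro B hB
    show (EuclideanSpace.projₗ (𝕜 := ℝ) i).toAddMonoidHom (μ B) = _
    rw [MeasureTheory.withDensityᵥ_apply (hFi_int i) hB,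
      hμB B hB]
    have h0 := (EuclideanSpace.proj (𝕜 := ℝ) i).integral_comp_comm (hFint.restrict (s := B))
    have h1 : (EuclideanSpace.projₗ (𝕜 := ℝ) i).toAddMonoidHom (∫ x in B, F x ∂ν)
        = (EuclideanSpace.proj (𝕜 := ℝ) i) (∫ x in B, F x ∂ν) := rfl
    rw [h1, ← h0]
    apply integral_congr_ae
    filter_upwards with x
    rfl
  -- integrability of the gradient components
  have hνΩ : ν Ωᶜ = 0 := by
    rw [hνdef, Measure.restrict_apply' hCmeas]
    have : Ωᶜ ∩ C = ∅ := by
      apply Set.eq_empty_of_forall_notMem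
      rintro x ⟨hx1, hx2⟩
      exact hx1 (hC hx2)
    rw [this, measure_empty]
  have hνaeΩ : ∀ᵐ x ∂ν, x ∈ Ω := by
    rw [MeasureTheory.ae_iff]
    exact hνΩ
  have hgradmeas : AEStronglyMeasurable (fun x => gradient φ x) ν := by
    have h1 : AEStronglyMeasurable (fun x => gradient φ x) (ν.restrict Ω) :=
      hφg.aestronglyMeasurable hΩ.measurableSet
    rwa [Measure.restrict_eq_self_of_ae_mem hνaeΩ] at h1
  have hgrad_int : ∀ i : Fin N, Integrable (fun x => gradient φ x i) ν := by
    intro i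
    apply (integrable_const ((K:ℝ))).mono'
    · have := (EuclideanSpace.proj (𝕜 := ℝ) i).continuous.comp_aestronglyMeasurable hgradmeas
      simpa using this
    · filter_upwards [hνaeΩ] with x hx
      rw [Real.norm_eq_abs]
      exact (aux_coord _ i).trans (hCgK x hx)
  have hFib : ∀ (i : Fin N) x, |F x i| ≤ 1 := fun i x => (aux_coord _ i).trans (hFbound x)
  have hFim : ∀ i : Fin N, Measurable (fun x => F x i) := by
    intro i
    have := (EuclideanSpace.proj (𝕜 := ℝ) i).continuous.measurable.comp hFmeas
    simpa [Function.comp_def] using this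
  -- compute vInt
  have step1 : vInt μ (fun x => gradient φ x)
      = ∑ i : Fin N, ∫ x, F x i * gradient φ x i ∂ν := by
    rw [vInt]
    congr 1
    ext i
    exact aux_sInt ν (fun x => F x i) (hFim i) (hFib i) (comp μ i) (hcomp i)
      (fun x => gradient φ x i) (hgrad_int i)
  have hprod_int : ∀ i : Fin N, Integrable (fun x => F x i * gradient φ x i) ν := by
    intro i
    apply (hgrad_int i).abs.mono' (((hFim i).aestronglyMeasurable).mul
      (hgrad_int i).aestronglyMeasurable)
    filter_upwards with x
    simp only [Pi.mul_apply, norm_mul, Real.norm_eq_abs]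
    nlinarith [hFib i x, abs_nonneg (gradient φ x i), abs_nonneg (F x i)]
  have step2 : ∑ i : Fin N, ∫ x, F x i * gradient φ x i ∂ν
      = ∫ x, (inner ℝ (F x) (gradient φ x) : ℝ) ∂ν := by
    rw [← integral_finset_sum Finset.univ (fun i _ => hprod_int i)]
    apply integral_congr_ae
    filter_upwards with x
    rw [PiLp.inner_apply]
    exact Finset.sum_congr rfl (fun i _ => by simp [mul_comm])
  have hinner_asm : AEStronglyMeasurable (fun x => (inner ℝ (F x) (gradient φ x) : ℝ)) ν :=
    hFmeas.aestronglyMeasurable.inner hgradmeas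
  have step3 : ∫ x, (inner ℝ (F x) (gradient φ x) : ℝ) ∂ν
      = ∫ t in Set.Ioo a b, (inner ℝ (F (ψ t)) (gradient φ (ψ t)) : ℝ) ∂volume := by
    rw [key]
    rw [MeasureTheory.integral_map hψae (by rw [← key]; exact hinner_asm)]
  have step4 : ∫ t in Set.Ioo a b, (inner ℝ (F (ψ t)) (gradient φ (ψ t)) : ℝ) ∂volume
      = ∫ t in Set.Ioo a b, d t ∂volume := by
    apply MeasureTheory.setIntegral_congr_fun measurableSet_Ioo
    intro t ht
    have hmemC : ψ t ∈ C := ⟨t, ht, rfl⟩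
    have h1 : F (ψ t) = ψ' t := by
      rw [hFdef, Set.indicator_of_mem hmemC]
      show ψ' (g (ψ t)) = ψ' t
      rw [hgdef, aux_ginv a b ψ hinj t ht]
    show (inner ℝ (F (ψ t)) (gradient φ (ψ t)) : ℝ) = d t
    rw [h1]
    exact real_inner_comm _ _
  -- FTC
  set GG : ℝ → ℝ := fun t => if t ≤ a then La else if t < b then φ (ψ t) else Lb with hGGdef
  have hGGa : GG a = La := by rw [hGGdef]; simp
  have hGGb : GG b = Lb := by
    rw [hGGdef]; simp [not_le.2 hab, lt_irrefl]
  have hGGIoo : ∀ t ∈ Set.Ioo a b, GG t = φ (ψ t) := by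
    intro t ht
    rw [hGGdef]
    simp [not_le.2 ht.1, ht.2]
  have hGGcont : ContinuousOn GG (Set.Icc a b) := by
    intro t ht
    rcases eq_or_lt_of_le ht.1 with h1 | h1
    · -- t = a
      subst h1
      rw [← continuousWithinAt_diff_self, ContinuousWithinAt, hGGa]
      have heq : GG =ᶠ[nhdsWithin a (Set.Ioi a)] (fun s => φ (ψ s)) := by
        filter_upwards [Ioo_mem_nhdsGT hab] with s hs using hGGIoo s hs
      have htd : Tendsto GG (nhdsWithin a (Set.Ioi a)) (nhds La) := hLa.congr' heq.symm
      apply htd.mono_left (nhdsWithin_mono a ?_)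
      rintro s ⟨hs1, hs2⟩
      exact lt_of_le_of_ne hs1.1 (Ne.symm (by simpa using hs2))
    rcases eq_or_lt_of_le ht.2 with h2 | h2
    · -- t = b
      subst h2
      rw [← continuousWithinAt_diff_self, ContinuousWithinAt, hGGb]
      have heq : GG =ᶠ[nhdsWithin t (Set.Iio t)] (fun s => φ (ψ s)) := by
        filter_upwards [Ioo_mem_nhdsLT hab] with s hs using hGGIoo s hs
      have htd : Tendsto GG (nhdsWithin t (Set.Iio t)) (nhds Lb) := hLb.congr' heq.symm
      apply htd.mono_left (nhdsWithin_mono t ?_)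
      rintro s ⟨hs1, hs2⟩
      exact lt_of_le_of_ne hs1.2 (by simpa using hs2)
    · -- interior
      apply ContinuousAt.continuousWithinAt
      have heq : GG =ᶠ[nhds t] (fun s => φ (ψ s)) := by
        filter_upwards [isOpen_Ioo.mem_nhds ⟨h1, h2⟩] with s hs using hGGIoo s hs
      apply ContinuousAt.congr _ heq.symm
      exact ((hφd (ψ t) (hmem t ⟨h1, h2⟩)).continuousAt).comp (hψd t ⟨h1, h2⟩).continuousAt
  have hGGderiv : ∀ t ∈ Set.Ioo a b, HasDerivWithinAt GG (d t) (Set.Ioi t) t := by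
    intro t ht
    have heq : (fun s => φ (ψ s)) =ᶠ[nhds t] GG := by
      filter_upwards [isOpen_Ioo.mem_nhds ht] with s hs using (hGGIoo s hs).symm
    exact ((hGd t ht).congr_of_eventuallyEq heq.symm).hasDerivWithinAt
  have hdcont : ContinuousOn d (Set.Ioo a b) := by
    have h1 : ContinuousOn (fun t => gradient φ (ψ t)) (Set.Ioo a b) := by
      apply hφg.comp (hψc.mono Set.Ioo_subset_Icc_self) hmem
    exact h1.inner (hψ'c.mono Set.Ioo_subset_Icc_self)
  have hdint : IntervalIntegrable d volume a b := by
    rw [intervalIntegrable_iff_integrableOn_Ioc_of_le hab.le]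
    have hres : (volume : Measure ℝ).restrict (Set.Ioc a b) = volume.restrict (Set.Ioo a b) :=
      Measure.restrict_congr_set (MeasureTheory.Ioo_ae_eq_Ioc).symm
    rw [MeasureTheory.IntegrableOn, hres]
    apply (integrable_const ((K:ℝ))).mono' (hdcont.aestronglyMeasurable measurableSet_Ioo)
    rw [MeasureTheory.ae_restrict_iff' measurableSet_Ioo]
    filter_upwards with t ht
    rw [Real.norm_eq_abs]
    exact hdbound t ht
  have ftc : ∫ t in a..b, d t = GG b - GG a :=
    intervalIntegral.integral_eq_sub_of_hasDeriv_right_of_le hab.le hGGcont hGGderiv hdint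
  have step5 : ∫ t in Set.Ioo a b, d t ∂volume = Lb - La := by
    rw [← MeasureTheory.integral_Ioc_eq_integral_Ioo, ← intervalIntegral.integral_of_le hab.le,
      ftc, hGGa, hGGb]
  rw [step1, step2, step3, step4, step5]


end
end
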